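/- arXiv:1910.02048 — 2 statements merged into one kernel-verified Lean document; each statement's English description precedes it below -/
import Mathlib

section
/- For any relational instance I over an arity-two signature, any non-leaf edge e of I, any incident pair Π for e, and any 1 ≤ i ≤ j, the j-th iterate of e in I relative to Π has a homomorphism to the i-th iterate of e in I relative to Π. -/
noncomputable section
open scoped Classical

/-- An instance over an arity-two signature `σ` with domain elements from `V`:
a finite set of facts `R(a,b)`. -/
abbrev Inst (σ V : Type) := Finset (σ × V × V)

namespace PQE

variable {σ V W : Type}

/-- The domain (active domain) of an instance. -/
def domI (I : Inst σ V) : Finset V :=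
  I.image (fun f => f.2.1) ∪ I.image (fun f => f.2.2)

/-- `h` is a homomorphism from `I` to `J`. -/
def IsHom (h : V → W) (I : Inst σ V) (J : Inst σ W) : Prop :=
  ∀ R a b, (R, a, b) ∈ I → (R, h a, h b) ∈ J

/-- `{u,v}` is an (undirected, Gaifman-graph) edge of `I`. -/
def IsEdge (I : Inst σ V) (u v : V) : Prop :=
  u ≠ v ∧ ∃ R, (R, u, v) ∈ I ∨ (R, v, u) ∈ I

/-- `u` is a leaf: it occurs in exactly one undirected edge. -/
def IsLeaf (I : Inst σ V) (u : V) : Prop := ∃! w, IsEdge I u w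

/-- `(u,v)` is a non-leaf edge: an edge neither of whose endpoints is a leaf. -/
def NonLeafEdge (I : Inst σ V) (u v : V) : Prop :=
  IsEdge I u v ∧ ¬ IsLeaf I u ∧ ¬ IsLeaf I v

/-- Rename the elements of a fact along `h`. -/
def rena (h : V → W) : σ × V × V → σ × W × W := fun f => (f.1, h f.2.1, h f.2.2)

/-- Substitution sending `u ↦ x`, `v ↦ y` and any other element `a ↦ emb a`. -/
def sb (u v : V) (x y : W) (emb : V → W) : V → W :=
  fun a => if a = u then x else if a = v then y else emb a

/-- The fact `f` is covered by the edge `{u,v}`: its domain is `⊆ {u,v}`. -/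
def Covered (u v : V) (f : σ × V × V) : Prop :=
  (f.2.1 = u ∨ f.2.1 = v) ∧ (f.2.2 = u ∨ f.2.2 = v)

/-- The fact `f` mentions neither `u` nor `v`. -/
def NotUV (u v : V) (f : σ × V × V) : Prop :=
  f.2.1 ≠ u ∧ f.2.1 ≠ v ∧ f.2.2 ≠ u ∧ f.2.2 ≠ v

/-- `f` is left-incident to the directed edge `(u,v)`: as a `σ↔`-fact it has the form
`R_L(l,u)` with `l ∉ {u,v}`. -/
def LeftInc (u v : V) (f : σ × V × V) : Prop :=
  (f.2.1 = u ∧ f.2.2 ≠ u ∧ f.2.2 ≠ v) ∨ (f.2.2 = u ∧ f.2.1 ≠ u ∧ f.2.1 ≠ v)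

/-- `f` is right-incident to the directed edge `(u,v)`: as a `σ↔`-fact it has the form
`R_R(v,r)` with `r ∉ {u,v}`. -/
def RightInc (u v : V) (f : σ × V × V) : Prop :=
  (f.2.1 = v ∧ f.2.2 ≠ u ∧ f.2.2 ≠ v) ∨ (f.2.2 = v ∧ f.2.1 ≠ u ∧ f.2.1 ≠ v)

/-- Copy the edge `(u,v)` of `I` onto the pair `(x,y)` (all facts covered by `(u,v)`,
renamed by `u ↦ x`, `v ↦ y`, other elements embedded by `emb`). -/
def copyEdge (I : Inst σ V) (u v : V) (x y : W) (emb : V → W) : Inst σ W :=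
  (I.filter (Covered u v)).image (rena (sb u v x y emb))

/-- `(FL, FR)` is an incident pair of the edge `(u,v)` in `I`. -/
def IncidentPair (I : Inst σ V) (u v : V) (FL FR : σ × V × V) : Prop :=
  FL ∈ I ∧ LeftInc u v FL ∧ FR ∈ I ∧ RightInc u v FR

end PQE

namespace PQE

variable {σ V : Type}

/-- The `n`-th iterate `I^n_{e,Π}` of the non-leaf edge `e = (u,v)` in `I` relative to the
incident pair `Π = (FL, FR)`.  The fresh elements are `u_i = Sum.inr (false, i)` and
`v_i = Sum.inr (true, i)` (for `1 ≤ i ≤ n`); the remaining elements of `I` are embedded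
via `Sum.inl`.  The edge `e` is replaced by a back-and-forth path of `2n-1` copies of `e`,
`FL` is kept at `u_1` and `FR` at `v_n`, and all other left-incident (resp. right-incident)
facts are copied onto every `u_i` (resp. every `v_i`). -/
def iter (I : Inst σ V) (u v : V) (FL FR : σ × V × V) (n : ℕ) :
    Inst σ (V ⊕ Bool × ℕ) :=
  let uu : ℕ → V ⊕ Bool × ℕ := fun i => Sum.inr (false, i)
  let vv : ℕ → V ⊕ Bool × ℕ := fun i => Sum.inr (true, i)
  (I.filter (NotUV u v)).image (rena Sum.inl)
  ∪ {rena (sb u v (uu 1) (vv n) Sum.inl) FL, rena (sb u v (uu 1) (vv n) Sum.inl) FR}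
  ∪ (Finset.range n).biUnion (fun i =>
      (I.filter (fun f => LeftInc u v f ∧ f ≠ FL)).image
        (rena (sb u v (uu (i+1)) (vv n) Sum.inl)))
  ∪ (Finset.range n).biUnion (fun i =>
      (I.filter (fun f => RightInc u v f ∧ f ≠ FR)).image
        (rena (sb u v (uu 1) (vv (i+1)) Sum.inl)))
  ∪ (Finset.range n).biUnion (fun i => copyEdge I u v (uu (i+1)) (vv (i+1)) Sum.inl)
  ∪ (Finset.range (n-1)).biUnion (fun i => copyEdge I u v (uu (i+2)) (vv (i+1)) Sum.inl)

end PQE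

/-! The homomorphism folds the path of `I^j` onto that of `I^i`: it sends `u_k, v_k` to
`u_{min k i}, v_{min k i}` and fixes the elements of `I`. Every fact of `I^j` is a copy of a fact
of `I` placed at some `u_k, v_l`, and clamping the indices gives a copy of the same kind in `I^i`;
the only change of kind is a back edge `(u_{k+1}, v_k)` with `k ≥ i`, which lands on the forward
edge `(u_i, v_i)`. -/

namespace PQE

variable {σ V W W' : Type}

theorem isHom_iff_image_rena_subset [DecidableEq W] {h : V → W} {I : Inst σ V} {J : Inst σ W} :
    IsHom h I J ↔ I.image (rena h) ⊆ J := by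
  simp only [Finset.image_subset_iff, IsHom, Prod.forall]
  rfl

theorem rena_rena (g : W → W') (h : V → W) (f : σ × V × V) :
    rena g (rena h f) = rena (g ∘ h) f :=
  rfl

theorem image_rena_image_rena [DecidableEq W] [DecidableEq W'] (s : Inst σ V) (g : W → W')
    (h : V → W) :
    (s.image (rena h)).image (rena g) = s.image (rena (g ∘ h)) := by
  rw [Finset.image_image]
  rfl

theorem comp_sb (g : W → W') (u v : V) (x y : W) (emb : V → W) :
    g ∘ sb u v x y emb = sb u v (g x) (g y) (g ∘ emb) := by
  funext a
  simp only [Function.comp, sb]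
  split_ifs <;> rfl

theorem image_rena_copyEdge [DecidableEq W'] (I : Inst σ V) (u v : V) (x y : W) (emb : V → W)
    (g : W → W') :
    (copyEdge I u v x y emb).image (rena g) = copyEdge I u v (g x) (g y) (g ∘ emb) := by
  rw [copyEdge, copyEdge, image_rena_image_rena, comp_sb]
  convert rfl

variable (I : Inst σ V) (u v : V) (FL FR : σ × V × V) {n : ℕ}

theorem image_notUV_subset_iter :
    (I.filter (NotUV u v)).image (rena Sum.inl) ⊆ iter I u v FL FR n := by
  intro f hf
  simp only [iter, Finset.mem_union]
  tauto

theorem rena_FL_mem_iter :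
    rena (sb u v (Sum.inr (false, 1)) (Sum.inr (true, n)) Sum.inl) FL ∈ iter I u v FL FR n := by
  simp [iter]

theorem rena_FR_mem_iter :
    rena (sb u v (Sum.inr (false, 1)) (Sum.inr (true, n)) Sum.inl) FR ∈ iter I u v FL FR n := by
  simp [iter]

theorem image_leftInc_subset_iter {k : ℕ} (hk : 1 ≤ k) (hkn : k ≤ n) :
    (I.filter (fun f => LeftInc u v f ∧ f ≠ FL)).image
      (rena (sb u v (Sum.inr (false, k)) (Sum.inr (true, n)) Sum.inl)) ⊆ iter I u v FL FR n := by
  obtain ⟨m, rfl⟩ : ∃ m, k = m + 1 := ⟨k - 1, by omega⟩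
  intro f hf
  simp only [iter, Finset.mem_union, Finset.mem_biUnion, Finset.mem_range]
  exact Or.inl <| Or.inl <| Or.inl <| Or.inr ⟨m, by omega, hf⟩

theorem image_rightInc_subset_iter {k : ℕ} (hk : 1 ≤ k) (hkn : k ≤ n) :
    (I.filter (fun f => RightInc u v f ∧ f ≠ FR)).image
      (rena (sb u v (Sum.inr (false, 1)) (Sum.inr (true, k)) Sum.inl)) ⊆ iter I u v FL FR n := by
  obtain ⟨m, rfl⟩ : ∃ m, k = m + 1 := ⟨k - 1, by omega⟩
  intro f hf
  simp only [iter, Finset.mem_union, Finset.mem_biUnion, Finset.mem_range]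
  exact Or.inl <| Or.inl <| Or.inr ⟨m, by omega, hf⟩

theorem copyEdge_subset_iter {k : ℕ} (hk : 1 ≤ k) (hkn : k ≤ n) :
    copyEdge I u v (Sum.inr (false, k)) (Sum.inr (true, k)) Sum.inl ⊆ iter I u v FL FR n := by
  obtain ⟨m, rfl⟩ : ∃ m, k = m + 1 := ⟨k - 1, by omega⟩
  intro f hf
  simp only [iter, Finset.mem_union, Finset.mem_biUnion, Finset.mem_range]
  exact Or.inl <| Or.inr ⟨m, by omega, hf⟩

theorem copyEdge_back_subset_iter {k : ℕ} (hk : 1 ≤ k) (hkn : k < n) :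
    copyEdge I u v (Sum.inr (false, k + 1)) (Sum.inr (true, k)) Sum.inl ⊆ iter I u v FL FR n := by
  obtain ⟨m, rfl⟩ : ∃ m, k = m + 1 := ⟨k - 1, by omega⟩
  intro f hf
  simp only [iter, Finset.mem_union, Finset.mem_biUnion, Finset.mem_range]
  exact Or.inr ⟨m, by omega, hf⟩

def clampCopies (i : ℕ) : V ⊕ Bool × ℕ → V ⊕ Bool × ℕ :=
  Sum.map id (Prod.map id (min · i))

@[simp]
theorem clampCopies_comp_inl (i : ℕ) :
    clampCopies i ∘ Sum.inl = (Sum.inl : V → V ⊕ Bool × ℕ) :=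
  rfl

@[simp]
theorem clampCopies_inr (i : ℕ) (b : Bool) (k : ℕ) :
    clampCopies (V := V) i (Sum.inr (b, k)) = Sum.inr (b, min k i) :=
  rfl

theorem image_clampCopies_iter_subset {i j : ℕ} (hi : 1 ≤ i) (hij : i ≤ j) :
    (iter I u v FL FR j).image (rena (clampCopies i)) ⊆ iter I u v FL FR i := by
  conv_lhs => rw [iter]
  simp only [Finset.image_union, Finset.biUnion_image, Finset.union_subset_iff,
    Finset.biUnion_subset, Finset.mem_range, Finset.image_insert, Finset.image_singleton,
    Finset.insert_subset_iff, Finset.singleton_subset_iff, rena_rena, image_rena_image_rena,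
    image_rena_copyEdge, comp_sb, clampCopies_comp_inl, clampCopies_inr,
    min_eq_left hi, min_eq_right hij]
  refine ⟨⟨⟨⟨⟨image_notUV_subset_iter I u v FL FR, rena_FL_mem_iter I u v FL FR,
    rena_FR_mem_iter I u v FL FR⟩, fun k hk => ?_⟩, fun k hk => ?_⟩, fun k hk => ?_⟩,
    fun k hk => ?_⟩
  · exact image_leftInc_subset_iter I u v FL FR (by omega) (min_le_right _ _)
  · exact image_rightInc_subset_iter I u v FL FR (by omega) (min_le_right _ _)
  · exact copyEdge_subset_iter I u v FL FR (by omega) (min_le_right _ _)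
  · rcases lt_or_ge (k + 1) i with hki | hik
    · rw [min_eq_left hki, min_eq_left hki.le]
      exact copyEdge_back_subset_iter I u v FL FR (by omega) hki
    · rw [min_eq_right (by omega : i ≤ k + 2), min_eq_right hik]
      exact copyEdge_subset_iter I u v FL FR hi le_rfl

end PQE

open PQE

theorem iterate_hom_to_smaller_general {σ V : Type} (I : Inst σ V) (u v : V)
    (FL FR : σ × V × V)
    (i j : ℕ) (h1 : 1 ≤ i) (hij : i ≤ j) :
    ∃ h : (V ⊕ Bool × ℕ) → (V ⊕ Bool × ℕ),
      IsHom h (iter I u v FL FR j) (iter I u v FL FR i) :=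
  ⟨clampCopies i,
    isHom_iff_image_rena_subset.2 (image_clampCopies_iter_subset I u v FL FR h1 hij)⟩

/-- For any instance `I` over an arity-two signature, any non-leaf edge
`e = (u,v)` of `I`, any incident pair `Π = (FL, FR)` for `e`, and any `1 ≤ i ≤ j`, the
`j`-th iterate of `e` in `I` relative to `Π` has a homomorphism to the `i`-th iterate. -/
theorem iterate_hom_to_smaller {σ V : Type} (I : Inst σ V) (u v : V)
    (FL FR : σ × V × V) (hE : NonLeafEdge I u v) (hPi : IncidentPair I u v FL FR)
    (i j : ℕ) (h1 : 1 ≤ i) (hij : i ≤ j) :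
    ∃ h : (V ⊕ Bool × ℕ) → (V ⊕ Bool × ℕ),
      IsHom h (iter I u v FL FR j) (iter I u v FL FR i) :=
  iterate_hom_to_smaller_general I u v FL FR i j h1 hij
end
end

section
/- Dissociating a non-leaf edge decreases the number of non-leaf edges of an instance by exactly one. Consequently, any iterative dissociation process starting from an instance I terminates in exactly n steps, where n is the number of non-leaf edges of I. -/
/-!
In the Gaifman graph, dissociating `{u, v}` replaces this edge by `{u, v'}` and `{u', v}`.
The fresh elements `u'`, `v'` are leaves, while `u` and `v` stay non-leaves: `u` was not a
leaf, so besides `v` it had a neighbour `w`, and now has the two neighbours `w ≠ v'`.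
Every other element keeps its neighbourhood. Hence the non-leaf edges after the step are
exactly those before it except `{u, v}`: each step uses up one of them, and the process stops
precisely when all are used up.
-/

noncomputable section
open scoped Classical

namespace PQE

variable {σ V : Type}

/-- The dissociation of the non-leaf edge `e = (u,v)` in `I` using fresh elements
`u', v'`: copy the edge `e` onto `(u,v')` and `(u',v)`, then remove all non-unary
facts covered by `e`. -/
def dissoc (I : Inst σ V) (u v u' v' : V) : Inst σ V :=
  (I ∪ copyEdge I u v u v' id ∪ copyEdge I u v u' v id).filter
    (fun f => ¬ (Covered u v f ∧ f.2.1 ≠ f.2.2))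

end PQE

namespace PQE

variable {σ V : Type}

/-- The set of non-leaf (undirected) edges of an instance. -/
def nonLeafEdgeSet (I : Inst σ V) : Set (Sym2 V) :=
  {p | ∃ a b, p = Sym2.mk a b ∧ NonLeafEdge I a b}

/-- One step of an iterative dissociation process: dissociate some non-leaf edge,
using fresh elements. -/
def DissocStep (I J : Inst σ V) : Prop :=
  ∃ u v u' v', NonLeafEdge I u v ∧ u' ∉ domI I ∧ v' ∉ domI I ∧ u' ≠ v' ∧
    J = dissoc I u v u' v'

section Edges

variable {I : Inst σ V} {a b c : V}

lemma mem_domI_of_mem_left {R : σ} (h : (R, a, b) ∈ I) : a ∈ domI I :=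
  Finset.mem_union_left _ (Finset.mem_image_of_mem _ h)

lemma mem_domI_of_mem_right {R : σ} (h : (R, a, b) ∈ I) : b ∈ domI I :=
  Finset.mem_union_right _ (Finset.mem_image_of_mem (fun f => f.2.2) h)

lemma IsEdge.symm (h : IsEdge I a b) : IsEdge I b a :=
  ⟨h.1.symm, h.2.imp fun _ => Or.symm⟩

lemma isEdge_comm : IsEdge I a b ↔ IsEdge I b a :=
  ⟨IsEdge.symm, IsEdge.symm⟩

lemma IsEdge.left_mem_domI (h : IsEdge I a b) : a ∈ domI I := by
  obtain ⟨-, R, h | h⟩ := h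
  exacts [mem_domI_of_mem_left h, mem_domI_of_mem_right h]

lemma IsEdge.right_mem_domI (h : IsEdge I a b) : b ∈ domI I :=
  h.symm.left_mem_domI

lemma not_isLeaf_of_isEdge_of_isEdge (hb : IsEdge I a b) (hc : IsEdge I a c) (hbc : b ≠ c) :
    ¬ IsLeaf I a :=
  fun ⟨_, _, hw⟩ => hbc ((hw b hb).trans (hw c hc).symm)

lemma exists_isEdge_ne_of_not_isLeaf (hb : IsEdge I a b) (h : ¬ IsLeaf I a) :
    ∃ c, IsEdge I a c ∧ c ≠ b := by
  by_contra! hc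
  exact h ⟨b, hb, hc⟩

lemma NonLeafEdge.symm (h : NonLeafEdge I a b) : NonLeafEdge I b a :=
  ⟨h.1.symm, h.2.2, h.2.1⟩

lemma mk_mem_nonLeafEdgeSet : s(a, b) ∈ nonLeafEdgeSet I ↔ NonLeafEdge I a b := by
  refine ⟨?_, fun h => ⟨a, b, rfl, h⟩⟩
  rintro ⟨c, d, hcd, h⟩
  rcases Sym2.eq_iff.mp hcd with ⟨rfl, rfl⟩ | ⟨rfl, rfl⟩
  exacts [h, h.symm]

lemma nonLeafEdgeSet_finite (I : Inst σ V) : (nonLeafEdgeSet I).Finite := by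
  refine (domI I).sym2.finite_toSet.subset ?_
  rintro _ ⟨a, b, rfl, h⟩
  exact Finset.mk_mem_sym2_iff.mpr ⟨h.1.left_mem_domI, h.1.right_mem_domI⟩

end Edges

section Covered

variable {W : Type} {u v a b : V} {R : σ}

lemma covered_comm {f : σ × V × V} : Covered v u f ↔ Covered u v f := by
  simp only [Covered, or_comm]

lemma covered_iff_mk_eq (hab : a ≠ b) : Covered u v (R, a, b) ↔ s(a, b) = s(u, v) := by
  rw [eq_comm, ← Sym2.mem_and_mem_iff hab, Sym2.mem_iff, Sym2.mem_iff]
  rfl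

lemma sb_comm (huv : u ≠ v) (x y : W) (emb : V → W) : sb v u y x emb = sb u v x y emb := by
  funext c
  unfold sb
  split_ifs <;> simp_all

lemma sb_mem_mk {x y : W} {emb : V → W} {e : V} (he : e ∈ s(u, v)) :
    sb u v x y emb e ∈ s(x, y) := by
  rw [Sym2.mem_iff] at he
  unfold sb
  split_ifs <;> simp_all

lemma copyEdge_comm (I : Inst σ V) (huv : u ≠ v) (x y : W) (emb : V → W) :
    copyEdge I v u y x emb = copyEdge I u v x y emb := by
  simp only [copyEdge, covered_comm, sb_comm huv]

lemma mk_eq_of_mem_copyEdge {I : Inst σ V} {x y : W} {emb : V → W} {R : σ} {a b : W}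
    (h : (R, a, b) ∈ copyEdge I u v x y emb) (hab : a ≠ b) : s(a, b) = s(x, y) := by
  simp only [copyEdge, Finset.mem_image, Finset.mem_filter] at h
  obtain ⟨⟨S, c, d⟩, ⟨-, hc, hd⟩, hg⟩ := h
  simp only [rena, Prod.mk.injEq] at hg
  obtain ⟨-, rfl, rfl⟩ := hg
  exact ((Sym2.mem_and_mem_iff hab).mp
    ⟨sb_mem_mk (Sym2.mem_iff.mpr hc), sb_mem_mk (Sym2.mem_iff.mpr hd)⟩).symm

lemma exists_mem_copyEdge {I : Inst σ V} (hE : IsEdge I u v) (x y : W) (emb : V → W) :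
    ∃ S, (S, x, y) ∈ copyEdge I u v x y emb ∨ (S, y, x) ∈ copyEdge I u v x y emb := by
  obtain ⟨huv, S, hS | hS⟩ := hE
  · exact ⟨S, Or.inl (Finset.mem_image.mpr
      ⟨_, Finset.mem_filter.mpr ⟨hS, Or.inl rfl, Or.inr rfl⟩, by simp [rena, sb, huv.symm]⟩)⟩
  · exact ⟨S, Or.inr (Finset.mem_image.mpr
      ⟨_, Finset.mem_filter.mpr ⟨hS, Or.inr rfl, Or.inl rfl⟩, by simp [rena, sb, huv.symm]⟩)⟩

end Covered

section Dissoc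

variable {I : Inst σ V} {u v u' v' a b : V}

lemma dissoc_comm (huv : u ≠ v) : dissoc I v u v' u' = dissoc I u v u' v' := by
  ext f
  simp only [dissoc, copyEdge_comm I huv, covered_comm, Finset.mem_filter, Finset.mem_union]
  tauto

lemma mem_dissoc_of_mem {R : σ} (h : (R, a, b) ∈ I) (hab : a ≠ b) (hne : s(a, b) ≠ s(u, v)) :
    (R, a, b) ∈ dissoc I u v u' v' :=
  Finset.mem_filter.mpr ⟨by simp [h], fun ⟨hc, _⟩ => hne ((covered_iff_mk_eq hab).mp hc)⟩

lemma isEdge_dissoc_of_isEdge (h : IsEdge I a b) (hne : s(a, b) ≠ s(u, v)) :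
    IsEdge (dissoc I u v u' v') a b := by
  obtain ⟨hab, R, hR | hR⟩ := h
  · exact ⟨hab, R, Or.inl (mem_dissoc_of_mem hR hab hne)⟩
  · exact ⟨hab, R, Or.inr (mem_dissoc_of_mem hR hab.symm (Sym2.eq_swap ▸ hne))⟩

lemma isEdge_dissoc_fresh_right (hE : IsEdge I u v) (hv' : v' ∉ domI I) :
    IsEdge (dissoc I u v u' v') u v' := by
  have hv'u : v' ≠ u := fun h => hv' (h ▸ hE.left_mem_domI)
  have hv'v : v' ≠ v := fun h => hv' (h ▸ hE.right_mem_domI)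
  obtain ⟨S, hS | hS⟩ := exists_mem_copyEdge hE u v' id
  · refine ⟨hv'u.symm, S, Or.inl (Finset.mem_filter.mpr ⟨by simp [hS], ?_⟩)⟩
    exact fun ⟨⟨_, h⟩, _⟩ => h.elim hv'u hv'v
  · refine ⟨hv'u.symm, S, Or.inr (Finset.mem_filter.mpr ⟨by simp [hS], ?_⟩)⟩
    exact fun ⟨⟨h, _⟩, _⟩ => h.elim hv'u hv'v

lemma isEdge_dissoc_fresh_left (hE : IsEdge I u v) (hu' : u' ∉ domI I) :
    IsEdge (dissoc I u v u' v') u' v := by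
  rw [← dissoc_comm hE.1]
  exact (isEdge_dissoc_fresh_right hE.symm hu').symm

lemma isEdge_dissoc_cases (h : IsEdge (dissoc I u v u' v') a b) :
    (IsEdge I a b ∧ s(a, b) ≠ s(u, v)) ∨ s(a, b) = s(u, v') ∨ s(a, b) = s(u', v) := by
  have key : ∀ {R : σ} {c d : V}, c ≠ d → (R, c, d) ∈ dissoc I u v u' v' →
      (IsEdge I c d ∧ s(c, d) ≠ s(u, v)) ∨ s(c, d) = s(u, v') ∨ s(c, d) = s(u', v) := by
    intro R c d hcd hR
    simp only [dissoc, Finset.mem_filter, Finset.mem_union] at hR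
    obtain ⟨(hI | hc) | hc, hnc⟩ := hR
    · refine Or.inl ⟨⟨hcd, R, Or.inl hI⟩, fun he => hnc ⟨?_, hcd⟩⟩
      exact (covered_iff_mk_eq hcd).mpr he
    · exact Or.inr (Or.inl (mk_eq_of_mem_copyEdge hc hcd))
    · exact Or.inr (Or.inr (mk_eq_of_mem_copyEdge hc hcd))
  obtain ⟨hab, R, hR | hR⟩ := h
  · exact key hab hR
  · simpa only [Sym2.eq_swap (a := b), isEdge_comm (a := b)] using key hab.symm hR

lemma isLeaf_dissoc_fresh_right (hE : IsEdge I u v) (hv' : v' ∉ domI I) (hne : u' ≠ v') :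
    IsLeaf (dissoc I u v u' v') v' := by
  refine ⟨u, (isEdge_dissoc_fresh_right hE hv').symm, fun w hw => ?_⟩
  rcases isEdge_dissoc_cases hw with ⟨hI, -⟩ | h | h
  · exact absurd hI.left_mem_domI hv'
  · rcases Sym2.eq_iff.mp h with ⟨h, -⟩ | ⟨-, h⟩
    exacts [absurd (h ▸ hE.left_mem_domI) hv', h]
  · rcases Sym2.eq_iff.mp h with ⟨h, -⟩ | ⟨h, -⟩
    exacts [absurd h.symm hne, absurd (h ▸ hE.right_mem_domI) hv']

lemma isLeaf_dissoc_fresh_left (hE : IsEdge I u v) (hu' : u' ∉ domI I) (hne : u' ≠ v') :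
    IsLeaf (dissoc I u v u' v') u' := by
  rw [← dissoc_comm hE.1]
  exact isLeaf_dissoc_fresh_right hE.symm hu' hne.symm

lemma not_isLeaf_dissoc_left (hnl : NonLeafEdge I u v) (hv' : v' ∉ domI I) :
    ¬ IsLeaf (dissoc I u v u' v') u := by
  obtain ⟨w, hw, hwv⟩ := exists_isEdge_ne_of_not_isLeaf hnl.1 hnl.2.1
  have hwu : w ≠ u := fun h => hw.1 h.symm
  refine not_isLeaf_of_isEdge_of_isEdge (isEdge_dissoc_fresh_right hnl.1 hv')
    (isEdge_dissoc_of_isEdge hw ?_) fun h => hv' (h ▸ hw.right_mem_domI)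
  rw [Ne, Sym2.eq_iff]
  tauto

lemma not_isLeaf_dissoc_right (hnl : NonLeafEdge I u v) (hu' : u' ∉ domI I) :
    ¬ IsLeaf (dissoc I u v u' v') v := by
  rw [← dissoc_comm hnl.1.1]
  exact not_isLeaf_dissoc_left hnl.symm hu'

lemma isLeaf_dissoc_iff_of_ne (hau : a ≠ u) (hav : a ≠ v) (hau' : a ≠ u') (hav' : a ≠ v') :
    IsLeaf (dissoc I u v u' v') a ↔ IsLeaf I a := by
  refine existsUnique_congr fun w => ⟨fun hw => ?_, fun hw => isEdge_dissoc_of_isEdge hw ?_⟩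
  · rcases isEdge_dissoc_cases hw with ⟨hI, -⟩ | h | h
    · exact hI
    all_goals rw [Sym2.eq_iff] at h; tauto
  · rw [Ne, Sym2.eq_iff]
    tauto

lemma isLeaf_dissoc_iff (hnl : NonLeafEdge I u v) (hu' : u' ∉ domI I) (hv' : v' ∉ domI I)
    (ha : a ∈ domI I) : IsLeaf (dissoc I u v u' v') a ↔ IsLeaf I a := by
  by_cases hau : a = u
  · subst hau
    exact iff_of_false (not_isLeaf_dissoc_left hnl hv') hnl.2.1
  by_cases hav : a = v
  · subst hav
    exact iff_of_false (not_isLeaf_dissoc_right hnl hu') hnl.2.2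
  exact isLeaf_dissoc_iff_of_ne hau hav (fun h => hu' (h ▸ ha)) (fun h => hv' (h ▸ ha))

lemma nonLeafEdge_dissoc_iff (hnl : NonLeafEdge I u v) (hu' : u' ∉ domI I)
    (hv' : v' ∉ domI I) (hne : u' ≠ v') :
    NonLeafEdge (dissoc I u v u' v') a b ↔ NonLeafEdge I a b ∧ s(a, b) ≠ s(u, v) := by
  have hleaf_u' := isLeaf_dissoc_fresh_left hnl.1 hu' hne
  have hleaf_v' := isLeaf_dissoc_fresh_right hnl.1 hv' hne
  constructor
  · rintro ⟨hE, ha, hb⟩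
    rcases isEdge_dissoc_cases hE with ⟨hI, hab⟩ | h | h
    · exact ⟨⟨hI, (isLeaf_dissoc_iff hnl hu' hv' hI.left_mem_domI).not.mp ha,
        (isLeaf_dissoc_iff hnl hu' hv' hI.right_mem_domI).not.mp hb⟩, hab⟩
    all_goals
      rcases Sym2.eq_iff.mp h with ⟨rfl, rfl⟩ | ⟨rfl, rfl⟩ <;> contradiction
  · rintro ⟨⟨hI, ha, hb⟩, hab⟩
    exact ⟨isEdge_dissoc_of_isEdge hI hab,
      (isLeaf_dissoc_iff hnl hu' hv' hI.left_mem_domI).not.mpr ha,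
      (isLeaf_dissoc_iff hnl hu' hv' hI.right_mem_domI).not.mpr hb⟩

lemma nonLeafEdgeSet_dissoc (hnl : NonLeafEdge I u v) (hu' : u' ∉ domI I)
    (hv' : v' ∉ domI I) (hne : u' ≠ v') :
    nonLeafEdgeSet (dissoc I u v u' v') = nonLeafEdgeSet I \ {s(u, v)} := by
  ext p
  induction p using Sym2.ind with
  | h a b =>
    simp only [Set.mem_sdiff, Set.mem_singleton_iff, mk_mem_nonLeafEdgeSet,
      nonLeafEdge_dissoc_iff hnl hu' hv' hne]

lemma ncard_nonLeafEdgeSet_dissoc_add_one (hnl : NonLeafEdge I u v) (hu' : u' ∉ domI I)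
    (hv' : v' ∉ domI I) (hne : u' ≠ v') :
    (nonLeafEdgeSet (dissoc I u v u' v')).ncard + 1 = (nonLeafEdgeSet I).ncard := by
  rw [nonLeafEdgeSet_dissoc hnl hu' hv' hne]
  exact Set.ncard_sdiff_singleton_add_one (mk_mem_nonLeafEdgeSet.mpr hnl)
    (nonLeafEdgeSet_finite I)

end Dissoc

lemma DissocStep.ncard_nonLeafEdgeSet_add_one {I J : Inst σ V} (h : DissocStep I J) :
    (nonLeafEdgeSet J).ncard + 1 = (nonLeafEdgeSet I).ncard := by
  obtain ⟨u, v, u', v', hnl, hu', hv', hne, rfl⟩ := h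
  exact ncard_nonLeafEdgeSet_dissoc_add_one hnl hu' hv' hne

lemma ncard_nonLeafEdgeSet_add_of_dissocStep_chain {f : ℕ → Inst σ V} {k : ℕ}
    (hstep : ∀ m < k, DissocStep (f m) (f (m + 1))) :
    ∀ m ≤ k, (nonLeafEdgeSet (f m)).ncard + m = (nonLeafEdgeSet (f 0)).ncard
  | 0, _ => rfl
  | m + 1, hm => by
    rw [← ncard_nonLeafEdgeSet_add_of_dissocStep_chain hstep m (by omega),
      ← (hstep m hm).ncard_nonLeafEdgeSet_add_one]
    omega

/-- Dissociating a non-leaf edge decreases the number of non-leaf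
edges by exactly one; consequently any iterative dissociation process starting from `I`
runs for exactly `n` steps, where `n` is the number of non-leaf edges of `I`: a chain of
`k` dissociation steps exists only if `k ≤ n`, and it ends in an instance with no
non-leaf edge exactly when `k = n`. -/
theorem dissociation_terminates {σ V : Type} :
    (∀ (I : Inst σ V) (u v u' v' : V), NonLeafEdge I u v →
        u' ∉ domI I → v' ∉ domI I → u' ≠ v' →
        (nonLeafEdgeSet (dissoc I u v u' v')).ncard = (nonLeafEdgeSet I).ncard - 1) ∧
    (∀ (I : Inst σ V) (f : ℕ → Inst σ V) (k : ℕ), f 0 = I →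
        (∀ m < k, DissocStep (f m) (f (m + 1))) →
        k ≤ (nonLeafEdgeSet I).ncard ∧
          (nonLeafEdgeSet (f k) = ∅ ↔ k = (nonLeafEdgeSet I).ncard)) := by
  refine ⟨fun I u v u' v' hnl hu' hv' hne => ?_, fun I f k hf0 hstep => ?_⟩
  · have := ncard_nonLeafEdgeSet_dissoc_add_one hnl hu' hv' hne
    omega
  · have hk := ncard_nonLeafEdgeSet_add_of_dissocStep_chain hstep k le_rfl
    rw [hf0] at hk
    rw [← Set.ncard_eq_zero (nonLeafEdgeSet_finite (f k))]
    omega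

end PQE
end
end
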